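/- arXiv:1707.07130 — 2 statements merged into one kernel-verified Lean document; each statement's English description precedes it below -/
import Mathlib

section
/- For every ordinal α, the (α+1)-bicyclic monoid B_{α+1} is isomorphic as a monoid to the Bruck extension B(B_α) of the α-bicyclic monoid B_α. Concretely, the map f : B_{α+1} → B(B_α) defined by f((a,b)) = (n₁, (a*, b*), m₁), where a = n₁ω^α + a* and b = m₁ω^α + b* are the unique decompositions with n₁, m₁ non-negative integers and a*, b* < ω^α, is a semigroup isomorphism. -/
/-!
Write an ordinal below `ω ^ (α + 1) = ω ^ α * ω` as `ω ^ α * n + a` with `n : ℕ` and `a < ω ^ α`;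
this identifies `Bicyclic (α + 1)` with `ℕ × Bicyclic α × ℕ`. An ordinal below `ω ^ α` is absorbed
by a following nonzero multiple of `ω ^ α`, so for `m < k` the difference
`(ω ^ α * k + c) - (ω ^ α * m + b)` is `ω ^ α * (k - m) + c`, and a left summand `a < ω ^ α` in front
of it disappears. Comparing the levels `m` and `k` then reproduces the three cases of the Bruck
product, the equal-level case being the product in `Bicyclic α`.
-/

open Ordinal Set Topology

noncomputable section

/-- The `α`-bicyclic monoid: pairs of ordinals below `ω ^ α`. -/
def Bicyclic (α : Ordinal) : Type 1 :=
  {p : Ordinal × Ordinal // p.1 < ω ^ α ∧ p.2 < ω ^ α}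

namespace Bicyclic

variable {α : Ordinal}

def mk (a b : Ordinal) (ha : a < ω ^ α) (hb : b < ω ^ α) : Bicyclic α :=
  ⟨(a, b), ha, hb⟩

instance : Mul (Bicyclic α) :=
  ⟨fun x y =>
    if x.val.2 ≤ y.val.1 then
      ⟨(x.val.1 + (y.val.1 - x.val.2), y.val.2),
        (principal_add_omega0_opow α) x.2.1
          (lt_of_le_of_lt (Ordinal.sub_le_self _ _) y.2.1),
        y.2.2⟩
    else
      ⟨(x.val.1, y.val.2 + (x.val.2 - y.val.1)),
        x.2.1,
        (principal_add_omega0_opow α) y.2.2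
          (lt_of_le_of_lt (Ordinal.sub_le_self _ _) x.2.2)⟩⟩

instance : One (Bicyclic α) :=
  ⟨⟨(0, 0), opow_pos α omega0_pos, opow_pos α omega0_pos⟩⟩

end Bicyclic

/-- The Bruck extension of a semigroup `S`. -/
def Bruck (S : Type*) : Type _ := ℕ × S × ℕ

def Bruck.mk {S : Type*} (n : ℕ) (s : S) (m : ℕ) : Bruck S := (n, s, m)

instance {S : Type*} [Mul S] : Mul (Bruck S) :=
  ⟨fun x y =>
    if x.2.2 < y.1 then (x.1 + y.1 - x.2.2, y.2.1, y.2.2)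
    else if y.1 < x.2.2 then (x.1, x.2.1, y.2.2 + x.2.2 - y.1)
    else (x.1, x.2.1 * y.2.1, y.2.2)⟩

/-- The Bruck extension of `S` with an adjoined (absorbing) zero `0*`. -/
abbrev BruckZero (S : Type*) := WithZero (Bruck S)

/-- The box `[n,m]` in the Bruck extension with zero. -/
def box (S : Type*) (n m : ℕ) : Set (BruckZero S) :=
  {x | ∃ s : S, x = ↑(Bruck.mk n s m)}

/-- A topology on `X` is shift-continuous if all two-sided shifts `x ↦ a * x * b`
are continuous. -/
def ShiftContinuous (X : Type*) [Mul X] [TopologicalSpace X] : Prop :=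
  ∀ a b : X, Continuous fun x => a * x * b

namespace Ordinal

variable {α a b : Ordinal} {m n k : ℕ}

theorem omega0_opow_mul_add_lt_mul_succ (ha : a < ω ^ α) (n : ℕ) :
    ω ^ α * n + a < ω ^ α * (n + 1 : ℕ) := by
  rw [Nat.cast_succ, mul_add_one]
  exact add_lt_add_right ha _

theorem omega0_opow_mul_add_lt_opow_succ (ha : a < ω ^ α) (n : ℕ) :
    ω ^ α * n + a < ω ^ (α + 1) := by
  rw [opow_add_one]
  exact (omega0_opow_mul_add_lt_mul_succ ha n).trans_le
    (mul_le_mul_right (natCast_lt_omega0 _).le _)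

theorem omega0_opow_mul_add_lt_of_lt (h : m < k) (hb : b < ω ^ α) (c : Ordinal) :
    ω ^ α * m + b < ω ^ α * k + c :=
  (omega0_opow_mul_add_lt_mul_succ hb m).trans_le
    ((mul_le_mul_right (Nat.cast_le.2 h) _).trans le_self_add)

theorem omega0_opow_mul_add_inj (ha : a < ω ^ α) (hb : b < ω ^ α)
    (h : ω ^ α * n + a = ω ^ α * m + b) : n = m ∧ a = b := by
  have hp : ω ^ α ≠ 0 := opow_ne_zero α omega0_ne_zero
  constructor
  · have := congrArg (· / ω ^ α) h
    simpa [mul_add_div _ hp, div_eq_zero_of_lt ha, div_eq_zero_of_lt hb] using this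
  · have := congrArg (· % ω ^ α) h
    simpa [mul_add_mod_self, mod_eq_of_lt ha, mod_eq_of_lt hb] using this

theorem exists_omega0_opow_mul_add_eq {x : Ordinal} (hx : x < ω ^ (α + 1)) :
    ∃ n : ℕ, ∃ a < ω ^ α, ω ^ α * n + a = x := by
  have hp : ω ^ α ≠ 0 := opow_ne_zero α omega0_ne_zero
  obtain ⟨n, hn⟩ := lt_omega0.1 ((lt_mul_iff_div_lt hp).1 (opow_add_one ω α ▸ hx))
  exact ⟨n, x % ω ^ α, mod_lt x hp, hn ▸ div_add_mod x (ω ^ α)⟩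

theorem omega0_opow_mul_add_sub_of_lt (h : m < k) (hb : b < ω ^ α) (c : Ordinal) :
    ω ^ α * k + c - (ω ^ α * m + b) = ω ^ α * (k - m : ℕ) + c := by
  apply sub_eq_of_add_eq
  rw [← add_assoc, add_assoc (ω ^ α * m), add_of_omega0_opow_le hb, ← mul_add, ← Nat.cast_add,
    Nat.add_sub_cancel' h.le]
  exact le_mul_left _ (by exact_mod_cast Nat.sub_pos_of_lt h)

theorem omega0_opow_mul_add_add_sub_of_lt (h : m < k) (ha : a < ω ^ α) (hb : b < ω ^ α)
    (n : ℕ) (c : Ordinal) :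
    ω ^ α * n + a + (ω ^ α * k + c - (ω ^ α * m + b)) = ω ^ α * (n + k - m : ℕ) + c := by
  rw [omega0_opow_mul_add_sub_of_lt h hb, ← add_assoc, add_assoc (ω ^ α * n),
    add_of_omega0_opow_le ha, ← mul_add, ← Nat.cast_add, Nat.add_sub_assoc h.le]
  exact le_mul_left _ (by exact_mod_cast Nat.sub_pos_of_lt h)

end Ordinal

namespace Bruck

variable {S : Type*} [Mul S] {n m k l : ℕ} {x y : S}

theorem mk_mul_mk_of_lt (h : m < k) : mk n x m * mk k y l = mk (n + k - m) y l :=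
  if_pos h

theorem mk_mul_mk_of_gt (h : k < m) : mk n x m * mk k y l = mk n x (l + m - k) :=
  (if_neg h.not_gt).trans (if_pos h)

theorem mk_mul_mk_self : mk n x m * mk m y l = mk n (x * y) l :=
  (if_neg (lt_irrefl m)).trans (if_neg (lt_irrefl m))

end Bruck

namespace Bicyclic

variable {α : Ordinal}

-- Ordinal subtraction truncates at `0`, so the two branches of the product merge into one formula.
theorem val_mul (x y : Bicyclic α) :
    (x * y).val = (x.val.1 + (y.val.1 - x.val.2), y.val.2 + (x.val.2 - y.val.1)) := by
  show (if x.val.2 ≤ y.val.1 then (⟨_, _⟩ : Bicyclic α) else ⟨_, _⟩).val = _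
  split_ifs with h
  · rw [Ordinal.sub_eq_zero_iff_le.2 h, add_zero]
  · rw [Ordinal.sub_eq_zero_iff_le.2 (not_le.1 h).le, add_zero]

def ofBruck (s : Bruck (Bicyclic α)) : Bicyclic (α + 1) :=
  ⟨(ω ^ α * s.1 + s.2.1.val.1, ω ^ α * s.2.2 + s.2.1.val.2),
    omega0_opow_mul_add_lt_opow_succ s.2.1.2.1 _, omega0_opow_mul_add_lt_opow_succ s.2.1.2.2 _⟩

theorem val_ofBruck_mk (n : ℕ) (x : Bicyclic α) (m : ℕ) :
    (ofBruck (Bruck.mk n x m)).val = (ω ^ α * n + x.val.1, ω ^ α * m + x.val.2) :=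
  rfl

theorem ofBruck_injective : Function.Injective (ofBruck (α := α)) := by
  rintro ⟨n, ⟨⟨a, b⟩, ha, hb⟩, m⟩ ⟨n', ⟨⟨a', b'⟩, ha', hb'⟩, m'⟩ h
  obtain ⟨rfl, rfl⟩ := omega0_opow_mul_add_inj ha ha' (congrArg (·.val.1) h)
  obtain ⟨rfl, rfl⟩ := omega0_opow_mul_add_inj hb hb' (congrArg (·.val.2) h)
  rfl

theorem ofBruck_surjective : Function.Surjective (ofBruck (α := α)) := by
  rintro ⟨⟨x, y⟩, hx, hy⟩
  obtain ⟨n, a, ha, rfl⟩ := exists_omega0_opow_mul_add_eq hx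
  obtain ⟨m, b, hb, rfl⟩ := exists_omega0_opow_mul_add_eq hy
  exact ⟨(n, ⟨(a, b), ha, hb⟩, m), rfl⟩

theorem ofBruck_mk_mul_mk (n : ℕ) (x : Bicyclic α) (m k : ℕ) (y : Bicyclic α) (l : ℕ) :
    ofBruck (Bruck.mk n x m * Bruck.mk k y l) =
      ofBruck (Bruck.mk n x m) * ofBruck (Bruck.mk k y l) := by
  apply Subtype.ext
  rw [val_mul, val_ofBruck_mk, val_ofBruck_mk]
  rcases lt_trichotomy m k with h | rfl | h
  · rw [Bruck.mk_mul_mk_of_lt h, val_ofBruck_mk, omega0_opow_mul_add_add_sub_of_lt h x.2.1 x.2.2,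
      Ordinal.sub_eq_zero_iff_le.2 (omega0_opow_mul_add_lt_of_lt h x.2.2 _).le, add_zero]
  · rw [Bruck.mk_mul_mk_self, val_ofBruck_mk, val_mul, add_sub_add_cancel, add_sub_add_cancel,
      add_assoc, add_assoc]
  · rw [Bruck.mk_mul_mk_of_gt h, val_ofBruck_mk, omega0_opow_mul_add_add_sub_of_lt h y.2.2 y.2.1,
      Ordinal.sub_eq_zero_iff_le.2 (omega0_opow_mul_add_lt_of_lt h y.2.1 _).le, add_zero]

def succEquivBruck : Bicyclic (α + 1) ≃* Bruck (Bicyclic α) :=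
  (MulEquiv.ofBijective
    (⟨ofBruck, fun ⟨n, x, m⟩ ⟨k, y, l⟩ => ofBruck_mk_mul_mk n x m k y l⟩ :
      Bruck (Bicyclic α) →ₙ* Bicyclic (α + 1))
    ⟨ofBruck_injective, ofBruck_surjective⟩).symm

theorem succEquivBruck_symm_apply (s : Bruck (Bicyclic α)) :
    succEquivBruck.symm s = ofBruck s :=
  rfl

end Bicyclic

/-- For every ordinal `α`, the `(α+1)`-bicyclic monoid is isomorphic (as a
magma/semigroup) to the Bruck extension of the `α`-bicyclic monoid, via the map sending
`(ω^α * n₁ + a*, ω^α * m₁ + b*)` (with `a*, b* < ω^α`) to `(n₁, (a*, b*), m₁)`. -/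
theorem bicyclic_succ_isomorphic_bruck (α : Ordinal) :
    ∃ f : Bicyclic (α + 1) ≃* Bruck (Bicyclic α),
      ∀ (x : Bicyclic (α + 1)) (n₁ m₁ : ℕ) (a' b' : Ordinal)
        (ha' : a' < ω ^ α) (hb' : b' < ω ^ α),
        x.val.1 = ω ^ α * n₁ + a' → x.val.2 = ω ^ α * m₁ + b' →
        f x = Bruck.mk n₁ (Bicyclic.mk a' b' ha' hb') m₁ := by
  refine ⟨Bicyclic.succEquivBruck, fun x n₁ m₁ a' b' ha' hb' h₁ h₂ => ?_⟩
  rw [← MulEquiv.eq_symm_apply, Bicyclic.succEquivBruck_symm_apply]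
  exact Subtype.ext (Prod.ext h₁ h₂)
end
end

section
/- Let k be a non-negative integer and let τ be a locally compact Hausdorff shift-continuous topology on B⁰(B_k) in which the adjoined zero 0* is not isolated. Then every open neighborhood U of 0* contains all but finitely many of the boxes [n,m], i.e., the set of pairs (n,m) of non-negative integers with [n,m] ⊄ U is finite. -/
open Ordinal Set Topology

noncomputable section

namespace Bruck

variable {S : Type*}

section Mul
variable [Mul S]

theorem mk_mul_mk (n m c d : ℕ) (s t : S) :
    mk n s m * mk c t d =
      if m < c then mk (n + c - m) t d
      else if c < m then mk n s (d + m - c) else mk n (s * t) d :=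
  rfl

theorem mk_mul_mk_of_lt_s13 {n m c d : ℕ} (s t : S) (h : m < c) :
    mk n s m * mk c t d = mk (n + c - m) t d := by
  rw [mk_mul_mk, if_pos h]

theorem mk_mul_mk_of_gt_s13 {n m c d : ℕ} (s t : S) (h : c < m) :
    mk n s m * mk c t d = mk n s (d + m - c) := by
  rw [mk_mul_mk, if_neg h.not_gt, if_pos h]

theorem mk_mul_mk_self_s13 (n m d : ℕ) (s t : S) : mk n s m * mk m t d = mk n (s * t) d := by
  rw [mk_mul_mk, if_neg (lt_irrefl m), if_neg (lt_irrefl m)]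

end Mul

section MulOneClass
variable [MulOneClass S]

theorem mk_one_mul_mk_of_le {n m c d : ℕ} (t : S) (h : m ≤ c) :
    mk n 1 m * mk c t d = mk (n + c - m) t d := by
  rcases h.lt_or_eq with h | rfl
  · exact mk_mul_mk_of_lt_s13 1 t h
  · rw [mk_mul_mk_self_s13, one_mul, Nat.add_sub_cancel]

theorem mk_mul_mk_one_of_le {n m c d : ℕ} (s : S) (h : c ≤ m) :
    mk n s m * mk c 1 d = mk n s (d + m - c) := by
  rcases h.lt_or_eq with h | rfl
  · exact mk_mul_mk_of_gt_s13 s 1 h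
  · rw [mk_mul_mk_self_s13, mul_one, Nat.add_sub_cancel]

instance : MulOneClass (Bruck S) where
  one := mk 0 1 0
  one_mul := fun ⟨n, s, m⟩ => by
    change mk 0 1 0 * mk n s m = mk n s m
    simpa using mk_one_mul_mk_of_le (n := 0) (d := m) s n.zero_le
  mul_one := fun ⟨n, s, m⟩ => by
    change mk n s m * mk 0 1 0 = mk n s m
    simpa using mk_mul_mk_one_of_le (n := n) (d := 0) s m.zero_le

theorem mk_one_self_mul_mk_of_le {c p q : ℕ} (t : S) (h : c ≤ p) :
    mk c 1 c * mk p t q = mk p t q := by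
  rw [mk_one_mul_mk_of_le t h, Nat.add_sub_cancel_left]

theorem mk_mul_mk_one_self_of_le {c p q : ℕ} (t : S) (h : c ≤ q) :
    mk p t q * mk c 1 c = mk p t q := by
  rw [mk_mul_mk_one_of_le t h, Nat.add_sub_cancel_left]

theorem mk_one_zero_mul_mk (p q : ℕ) (t : S) : mk 1 1 0 * mk p t q = mk (p + 1) t q := by
  rw [mk_one_mul_mk_of_le t p.zero_le, Nat.sub_zero, Nat.add_comm]

theorem mk_zero_one_mul_mk_succ (p q : ℕ) (t : S) : mk 0 1 1 * mk (p + 1) t q = mk p t q := by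
  rw [mk_one_mul_mk_of_le t (Nat.le_add_left 1 p), Nat.zero_add, Nat.add_sub_cancel]

theorem mk_mul_mk_zero_one (p q : ℕ) (t : S) : mk p t q * mk 0 1 1 = mk p t (q + 1) := by
  rw [mk_mul_mk_one_of_le t q.zero_le, Nat.sub_zero, Nat.add_comm]

theorem mk_succ_mul_mk_one_zero (p q : ℕ) (t : S) : mk p t (q + 1) * mk 1 1 0 = mk p t q := by
  rw [mk_mul_mk_one_of_le t (Nat.le_add_left 1 q), Nat.zero_add, Nat.add_sub_cancel]

end MulOneClass

end Bruck

namespace Bicyclic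

variable {α : Ordinal}

theorem mul_val (x y : Bicyclic α) : (x * y).val =
    if x.val.2 ≤ y.val.1 then (x.val.1 + (y.val.1 - x.val.2), y.val.2)
    else (x.val.1, y.val.2 + (x.val.2 - y.val.1)) := by
  change (Mul.mul x y).val = _
  unfold Mul.mul instMul
  split_ifs with h <;> simp [h]

theorem one_val : (1 : Bicyclic α).val = (0, 0) := rfl

instance : MulOneClass (Bicyclic α) where
  one_mul t := Subtype.ext <| by
    rw [mul_val, one_val, if_pos zero_le]
    simp
  mul_one t := Subtype.ext <| by
    rw [mul_val, one_val]
    split_ifs with h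
    · have h0 : t.val.2 = 0 := nonpos_iff_eq_zero.1 h
      simp [h0, Prod.ext_iff]
    · simp

theorem exists_mul_mul_eq (s t : Bicyclic α) : ∃ a c : Bicyclic α, a * t * c = s := by
  refine ⟨mk s.val.1 t.val.1 s.2.1 t.2.1, mk t.val.2 s.val.2 t.2.2 s.2.2, ?_⟩
  have hst : mk s.val.1 t.val.1 s.2.1 t.2.1 * t = mk s.val.1 t.val.2 s.2.1 t.2.2 :=
    Subtype.ext (by rw [mul_val]; simp [mk])
  exact Subtype.ext (by rw [hst, mul_val]; simp [mk])

end Bicyclic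

/-!
The argument works for any monoid `S` that is simple, i.e. `S = S t S` for every `t`; the
`α`-bicyclic monoid is one.

The idempotent `⟪c, 1, c⟫` fixes, by left (right) multiplication, every box whose row (column)
index is at least `c`, but moves every point of the boxes of lower index. In a Hausdorff space the
points not fixed by a continuous map form an open set, so every nonzero point has a neighbourhood
meeting finitely many boxes, and so does every compact set avoiding `0*`.

Let `K ⊆ U` be a compact neighbourhood of `0*`. For a shift `f` with `f 0* = 0*`, the compact set
`K \ f⁻¹(int K)` avoids `0*`, so outside a finite square `[0, B]²` of indices `f` maps points of
`K` into `K`. Using the four unit shifts by `⟪1, 1, 0⟫` and `⟪0, 1, 1⟫`, whether `⟪p, t, q⟫ ∈ K`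
does not depend on `(p, q)` outside the square. Since `0*` is not isolated and the finitely many
boxes of the square stay away from it, `K` contains some `⟪p, t, q⟫` outside the square, hence all
of them; multiplying by `⟪B + 1, a, B + 1⟫` passes from `t` to `a * t` and `t * a`, and simplicity
gives every `s`.
-/

open Filter Bruck

local notation "⟪" n ", " s ", " m "⟫" => (WithZero.coe (Bruck.mk n s m) : BruckZero _)

theorem ShiftContinuous.continuous_mul_left {X : Type*} [MulOneClass X] [TopologicalSpace X]
    (h : ShiftContinuous X) (a : X) : Continuous (a * ·) := by
  simpa using h a 1

theorem ShiftContinuous.continuous_mul_right {X : Type*} [MulOneClass X] [TopologicalSpace X]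
    (h : ShiftContinuous X) (a : X) : Continuous (· * a) := by
  simpa using h 1 a

theorem Set.Finite.exists_forall_le_of_prod {F : Set (ℕ × ℕ)} (hF : F.Finite) :
    ∃ B : ℕ, ∀ p ∈ F, p.1 ≤ B ∧ p.2 ≤ B := by
  obtain ⟨b, hb⟩ := hF.bddAbove
  exact ⟨max b.1 b.2, fun p hp =>
    ⟨(hb hp).1.trans (le_max_left _ _), (hb hp).2.trans (le_max_right _ _)⟩⟩

theorem iff_of_step_iff_outside_square {P : ℕ → ℕ → Prop} {B : ℕ}
    (hrow : ∀ p q, B < p ∨ B < q → (P p q ↔ P (p + 1) q))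
    (hcol : ∀ p q, B < p ∨ B < q → (P p q ↔ P p (q + 1)))
    {p q p' q' : ℕ} (h : B < p ∨ B < q) (h' : B < p' ∨ B < q') : P p q ↔ P p' q' := by
  have row : ∀ q, B < q → ∀ p, P p q ↔ P 0 q := by
    intro q hq p
    induction p with
    | zero => rfl
    | succ p ih => exact (hrow p q (Or.inr hq)).symm.trans ih
  have col : ∀ p, B < p → ∀ q, P p q ↔ P p 0 := by
    intro p hp q
    induction q with
    | zero => rfl
    | succ q ih => exact (hcol p q (Or.inl hp)).symm.trans ih
  have corner : ∀ p q, B < p ∨ B < q → (P p q ↔ P (B + 1) (B + 1)) := by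
    rintro p q (hp | hq)
    · exact (col p hp q).trans <| (col p hp (B + 1)).symm.trans <|
        (row (B + 1) B.lt_succ_self p).trans (row (B + 1) B.lt_succ_self (B + 1)).symm
    · exact (row q hq p).trans <| (row q hq (B + 1)).symm.trans <|
        (col (B + 1) B.lt_succ_self q).trans (col (B + 1) B.lt_succ_self (B + 1)).symm
  exact (corner p q h).trans (corner p' q' h').symm

section BoxSupport

variable {S : Type*}

def boxSupport (A : Set (BruckZero S)) : Set (ℕ × ℕ) :=
  {p | (A ∩ box S p.1 p.2).Nonempty}

theorem boxSupport_mono {A A' : Set (BruckZero S)} (h : A ⊆ A') : boxSupport A ⊆ boxSupport A' :=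
  fun _ ⟨y, hyA, hy⟩ => ⟨y, h hyA, hy⟩

theorem boxSupport_union (A A' : Set (BruckZero S)) :
    boxSupport (A ∪ A') = boxSupport A ∪ boxSupport A' := by
  ext p
  simp only [boxSupport, mem_ofPred_eq, union_inter_distrib_right, union_nonempty, mem_union]

variable [MulOneClass S] [TopologicalSpace (BruckZero S)]

theorem exists_mem_nhds_finite_boxSupport [T2Space (BruckZero S)]
    (hτ : ShiftContinuous (BruckZero S)) (n m : ℕ) (s : S) :
    ∃ O ∈ 𝓝 ⟪n, s, m⟫, (boxSupport O).Finite := by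
  have hne : ∀ (a : S) (d : ℕ), ⟪n + 1, a, d⟫ ≠ ⟪n, s, m⟫ := fun a d h => by
    simpa [Bruck.mk] using congrArg Prod.fst (WithZero.coe_injective h)
  refine ⟨{y | ⟪n + 1, (1 : S), n + 1⟫ * y ≠ y} ∩ {y | y * ⟪m + 1, (1 : S), m + 1⟫ ≠ y},
    inter_mem ?_ ?_, ?_⟩
  · refine (isOpen_ne_fun (hτ.continuous_mul_left _) continuous_id).mem_nhds ?_
    rw [mem_ofPred_eq, ← WithZero.coe_mul, mk_mul_mk_of_gt_s13 _ _ n.lt_succ_self]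
    exact hne _ _
  · refine (isOpen_ne_fun (hτ.continuous_mul_right _) continuous_id).mem_nhds ?_
    rw [mem_ofPred_eq, ← WithZero.coe_mul, mk_mul_mk_of_lt_s13 _ _ m.lt_succ_self,
      Nat.add_sub_assoc (Nat.le_add_right m 1), Nat.add_sub_cancel_left]
    exact hne _ _
  refine ((finite_Iic n).prod (finite_Iic m)).subset ?_
  rintro ⟨p, q⟩ ⟨_, ⟨h₁, h₂⟩, t, rfl⟩
  refine ⟨mem_Iic.2 <| not_lt.1 fun hp => h₁ ?_, mem_Iic.2 <| not_lt.1 fun hq => h₂ ?_⟩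
  · rw [← WithZero.coe_mul, mk_one_self_mul_mk_of_le t hp]
  · rw [← WithZero.coe_mul, mk_mul_mk_one_self_of_le t hq]

theorem IsCompact.finite_boxSupport [T2Space (BruckZero S)] (hτ : ShiftContinuous (BruckZero S))
    {C : Set (BruckZero S)} (hC : IsCompact C) (h0 : (0 : BruckZero S) ∉ C) :
    (boxSupport C).Finite := by
  refine hC.induction_on (p := fun A => (boxSupport A).Finite) (by simp [boxSupport])
    (fun A A' h hA' => hA'.subset (boxSupport_mono h))
    (fun A A' hA hA' => (boxSupport_union A A').symm ▸ hA.union hA') fun x hx => ?_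
  obtain ⟨⟨n, s, m⟩, rfl⟩ := WithZero.ne_zero_iff_exists.1 (ne_of_mem_of_not_mem hx h0)
  obtain ⟨O, hO, hfin⟩ := exists_mem_nhds_finite_boxSupport hτ n m s
  exact ⟨O, mem_nhdsWithin_of_mem_nhds hO, hfin⟩

end BoxSupport

section Neighborhoods

variable {S : Type*} [MulOneClass S] [TopologicalSpace (BruckZero S)]

theorem compl_box_mem_nhds_zero [T1Space (BruckZero S)] (hτ : ShiftContinuous (BruckZero S))
    (p q : ℕ) : (box S p q)ᶜ ∈ 𝓝 (0 : BruckZero S) := by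
  have hcollapse : box S p q ⊆ (⟪p + 1, (1 : S), p + 1⟫ * ·) ⁻¹' {⟪p + 1, (1 : S), q + 1⟫} := by
    rintro _ ⟨t, rfl⟩
    rw [mem_preimage, ← WithZero.coe_mul, mk_mul_mk_of_gt_s13 _ _ p.lt_succ_self, mem_singleton_iff,
      Nat.add_sub_assoc (Nat.le_add_right p 1), Nat.add_sub_cancel_left]
  refine mem_of_superset ?_ (compl_subset_compl.2 hcollapse)
  exact (hτ.continuous_mul_left _).continuousAt.preimage_mem_nhds
    (compl_singleton_mem_nhds (by simp))

theorem exists_mem_outside_square [T1Space (BruckZero S)] (hτ : ShiftContinuous (BruckZero S))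
    (h0 : ¬ IsOpen ({0} : Set (BruckZero S))) {N : Set (BruckZero S)} (hN : N ∈ 𝓝 0) (B : ℕ) :
    ∃ p q, (B < p ∨ B < q) ∧ ∃ t : S, ⟪p, t, q⟫ ∈ N := by
  have : (𝓝[≠] (0 : BruckZero S)).NeBot := ⟨mt (isOpen_singleton_iff_punctured_nhds 0).2 h0⟩
  have hsquare : ⋂ p ∈ Iic B ×ˢ Iic B, (box S p.1 p.2)ᶜ ∈ 𝓝 (0 : BruckZero S) :=
    (biInter_mem ((finite_Iic B).prod (finite_Iic B))).2 fun p _ =>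
      compl_box_mem_nhds_zero hτ p.1 p.2
  obtain ⟨y, ⟨hyN, hy⟩, hy0⟩ :=
    Filter.nonempty_of_mem (inter_mem (mem_nhdsWithin_of_mem_nhds (inter_mem hN hsquare))
      (self_mem_nhdsWithin (s := {0}ᶜ)))
  obtain ⟨⟨p, t, q⟩, rfl⟩ := WithZero.ne_zero_iff_exists.1 hy0
  refine ⟨p, q, ?_, t, hyN⟩
  by_contra! h
  exact mem_iInter₂.1 hy (p, q) ⟨mem_Iic.2 h.1, mem_Iic.2 h.2⟩ ⟨t, rfl⟩

variable [T2Space (BruckZero S)] {K : Set (BruckZero S)}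

theorem exists_bound_mapsTo (hτ : ShiftContinuous (BruckZero S)) (hK : IsCompact K)
    {f : BruckZero S → BruckZero S} (hf : Continuous f) (hf0 : f 0 ∈ interior K) :
    ∃ B : ℕ, ∀ p q, B < p ∨ B < q → ∀ t : S, ⟪p, t, q⟫ ∈ K → f ⟪p, t, q⟫ ∈ K := by
  have hC : IsCompact (K \ f ⁻¹' interior K) := hK.diff (isOpen_interior.preimage hf)
  obtain ⟨B, hB⟩ := (hC.finite_boxSupport hτ fun h => h.2 hf0).exists_forall_le_of_prod
  refine ⟨B, fun p q hpq t ht => interior_subset (not_not.1 fun hft => ?_)⟩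
  have := hB (p, q) ⟨_, ⟨ht, hft⟩, t, rfl⟩
  omega

end Neighborhoods

section Propagation

variable {S : Type*}

def StepInvariant (K : Set (BruckZero S)) (B : ℕ) : Prop :=
  ∀ (t : S) (p q : ℕ), B < p ∨ B < q →
    (⟪p, t, q⟫ ∈ K ↔ ⟪p + 1, t, q⟫ ∈ K) ∧ (⟪p, t, q⟫ ∈ K ↔ ⟪p, t, q + 1⟫ ∈ K)

theorem StepInvariant.mem_iff {K : Set (BruckZero S)} {B : ℕ} (hK : StepInvariant K B) (t : S)
    {p q p' q' : ℕ} (h : B < p ∨ B < q) (h' : B < p' ∨ B < q') :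
    ⟪p, t, q⟫ ∈ K ↔ ⟪p', t, q'⟫ ∈ K :=
  iff_of_step_iff_outside_square (P := fun p q => ⟪p, t, q⟫ ∈ K)
    (fun p q hpq => (hK t p q hpq).1) (fun p q hpq => (hK t p q hpq).2) h h'

variable [MulOneClass S] [TopologicalSpace (BruckZero S)] [T2Space (BruckZero S)]
  {K : Set (BruckZero S)}

theorem exists_stepInvariant (hτ : ShiftContinuous (BruckZero S)) (hK : IsCompact K)
    (h0K : (0 : BruckZero S) ∈ interior K) : ∃ B, StepInvariant K B := by
  obtain ⟨B₁, h₁⟩ := exists_bound_mapsTo hτ hK (hτ.continuous_mul_left ⟪1, (1 : S), 0⟫)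
    (by simpa using h0K)
  obtain ⟨B₂, h₂⟩ := exists_bound_mapsTo hτ hK (hτ.continuous_mul_left ⟪0, (1 : S), 1⟫)
    (by simpa using h0K)
  obtain ⟨B₃, h₃⟩ := exists_bound_mapsTo hτ hK (hτ.continuous_mul_right ⟪0, (1 : S), 1⟫)
    (by simpa using h0K)
  obtain ⟨B₄, h₄⟩ := exists_bound_mapsTo hτ hK (hτ.continuous_mul_right ⟪1, (1 : S), 0⟫)
    (by simpa using h0K)
  refine ⟨max (max B₁ B₂) (max B₃ B₄), fun t p q hpq =>
    ⟨⟨fun h => ?_, fun h => ?_⟩, ⟨fun h => ?_, fun h => ?_⟩⟩⟩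
  · simpa only [← WithZero.coe_mul, mk_one_zero_mul_mk] using h₁ p q (by omega) t h
  · simpa only [← WithZero.coe_mul, mk_zero_one_mul_mk_succ] using h₂ (p + 1) q (by omega) t h
  · simpa only [← WithZero.coe_mul, mk_mul_mk_zero_one] using h₃ p q (by omega) t h
  · simpa only [← WithZero.coe_mul, mk_succ_mul_mk_one_zero] using h₄ p (q + 1) (by omega) t h

theorem StepInvariant.mem_mul_left {B : ℕ} (hB : StepInvariant K B)
    (hτ : ShiftContinuous (BruckZero S)) (hK : IsCompact K) (h0K : (0 : BruckZero S) ∈ interior K)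
    {t : S} (ht : ∀ p q, B < p ∨ B < q → ⟪p, t, q⟫ ∈ K) (a : S)
    {p q : ℕ} (hpq : B < p ∨ B < q) : ⟪p, a * t, q⟫ ∈ K := by
  obtain ⟨C, hC⟩ := exists_bound_mapsTo hτ hK (hτ.continuous_mul_left ⟪B + 1, a, B + 1⟫)
    (by simpa using h0K)
  have h := hC (B + 1) (max B C + 1) (by omega) t (ht _ _ (by omega))
  rw [← WithZero.coe_mul, mk_mul_mk_self_s13] at h
  exact (hB.mem_iff _ (by omega) hpq).1 h

theorem StepInvariant.mem_mul_right {B : ℕ} (hB : StepInvariant K B)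
    (hτ : ShiftContinuous (BruckZero S)) (hK : IsCompact K) (h0K : (0 : BruckZero S) ∈ interior K)
    {t : S} (ht : ∀ p q, B < p ∨ B < q → ⟪p, t, q⟫ ∈ K) (a : S)
    {p q : ℕ} (hpq : B < p ∨ B < q) : ⟪p, t * a, q⟫ ∈ K := by
  obtain ⟨C, hC⟩ := exists_bound_mapsTo hτ hK (hτ.continuous_mul_right ⟪B + 1, a, B + 1⟫)
    (by simpa using h0K)
  have h := hC (max B C + 1) (B + 1) (by omega) t (ht _ _ (by omega))
  rw [← WithZero.coe_mul, mk_mul_mk_self_s13] at h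
  exact (hB.mem_iff _ (by omega) hpq).1 h

end Propagation

theorem finite_not_box_subset {S : Type*} [MulOneClass S] (hS : ∀ s t : S, ∃ a c : S, a * t * c = s)
    [TopologicalSpace (BruckZero S)] [T2Space (BruckZero S)] [LocallyCompactSpace (BruckZero S)]
    (hτ : ShiftContinuous (BruckZero S)) (h0 : ¬ IsOpen ({0} : Set (BruckZero S)))
    {U : Set (BruckZero S)} (hU : IsOpen U) (h0U : (0 : BruckZero S) ∈ U) :
    {p : ℕ × ℕ | ¬ box S p.1 p.2 ⊆ U}.Finite := by
  obtain ⟨K, hK0, hKU, hK⟩ := local_compact_nhds (hU.mem_nhds h0U)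
  have h0K : (0 : BruckZero S) ∈ interior K := mem_interior_iff_mem_nhds.2 hK0
  obtain ⟨B, hB⟩ := exists_stepInvariant hτ hK h0K
  obtain ⟨p₀, q₀, hpq₀, t, ht⟩ := exists_mem_outside_square hτ h0 hK0 B
  have hfar_t : ∀ p q, B < p ∨ B < q → ⟪p, t, q⟫ ∈ K := fun p q hpq => (hB.mem_iff t hpq₀ hpq).1 ht
  have hfar : ∀ (s : S) p q, B < p ∨ B < q → ⟪p, s, q⟫ ∈ K := by
    intro s p q hpq
    obtain ⟨a, c, rfl⟩ := hS s t
    exact hB.mem_mul_right hτ hK h0K (fun _ _ => hB.mem_mul_left hτ hK h0K hfar_t a) c hpq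
  refine ((finite_Iic B).prod (finite_Iic B)).subset fun ⟨p, q⟩ hpq => ?_
  by_contra hout
  have hfar_pq : B < p ∨ B < q := by
    simpa only [mem_prod, mem_Iic, not_and_or, not_le] using hout
  exact hpq fun y ⟨s, hy⟩ => hy ▸ hKU (hfar s p q hfar_pq)

/-- For a locally compact Hausdorff shift-continuous topology on
`B⁰(B_k)` with non-isolated zero, each open neighborhood `U` of `0*` contains all but
finitely many of the boxes `[n,m]`. -/
theorem neighborhood_contains_cofinitely_many_boxes (k : ℕ)
    [TopologicalSpace (BruckZero (Bicyclic k))] [T2Space (BruckZero (Bicyclic k))]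
    [LocallyCompactSpace (BruckZero (Bicyclic k))]
    (hτ : ShiftContinuous (BruckZero (Bicyclic k)))
    (h0 : ¬ IsOpen ({0} : Set (BruckZero (Bicyclic k))))
    (U : Set (BruckZero (Bicyclic k)))
    (hU : IsOpen U) (h0U : (0 : BruckZero (Bicyclic k)) ∈ U) :
    {p : ℕ × ℕ | ¬ box (Bicyclic k) p.1 p.2 ⊆ U}.Finite :=
  finite_not_box_subset Bicyclic.exists_mul_mul_eq hτ h0 hU h0U
end
end
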